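/- arXiv:1704.05206 — 2 statements merged into one kernel-verified Lean document; each statement's English description precedes it below -/
import Mathlib

section
/- Let $U$ and $Q$ be finite-dimensional complex vector spaces and consider the subset $\widetilde{\mathcal A} = \{u \otimes q + c\,u^2 : u \in U,\ q \in Q,\ c \in \mathbb{C}\} \subset (U \otimes Q) \oplus S^2 U$. Then for $\beta = u \otimes q$ with $u \neq 0$, $q \neq 0$, the set $T_\beta = \{u \otimes q' + u' \otimes q + c\,u^2 : u' \in U,\ q' \in Q,\ c \in \mathbb{C}\}$ is a linear subspace of $(U \otimes Q) \oplus S^2U$ of dimension $\dim U + \dim Q$, and it contains the velocity vector at $t=0$ of every smooth curve in $\widetilde{\mathcal A}$ passing through $\beta$ at $t=0$. -/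
/-!
`T_β` is the image of the linear map `(u', q', c) ↦ (u ⊗ q' + u' ⊗ q, c u²)` on `U × Q × ℂ`.
Since `u, q ≠ 0`, its kernel is the line spanned by `(u, -q, 0)`, so by rank–nullity `T_β`
has dimension `dim U + dim Q`. A curve `u_t ⊗ q_t + c_t u_t²` with `c_0 = 0` has velocity
`u ⊗ q̇ + u̇ ⊗ q + ċ u²` at `t = 0` by the product rule, which is the image of `(u̇, q̇, ċ)`.
-/

open Module

/-- Ambient space modelling `(U ⊗ Q) ⊕ S²U` with `U = ℂᵏ`, `Q = ℂᵐ`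
(`U ⊗ Q` as `k × m` matrices, `S²U` as (symmetric) `k × k` matrices). -/
abbrev Amb (k m : ℕ) := (Fin k → Fin m → ℂ) × (Fin k → Fin k → ℂ)

/-- `u ⊗ q`. -/
def outer {k m : ℕ} (u : Fin k → ℂ) (q : Fin m → ℂ) : Fin k → Fin m → ℂ :=
  fun i j => u i * q j

/-- `u² ∈ S²U`. -/
def sqv {k : ℕ} (u : Fin k → ℂ) : Fin k → Fin k → ℂ := fun i j => u i * u j

section
variable {k m : ℕ}

@[simp] lemma outer_apply (u : Fin k → ℂ) (q : Fin m → ℂ) (i : Fin k) (j : Fin m) :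
    outer u q i j = u i * q j := rfl

lemma outer_ne_zero {u : Fin k → ℂ} {q : Fin m → ℂ} (hu : u ≠ 0) (hq : q ≠ 0) :
    outer u q ≠ 0 := by
  obtain ⟨i, hi⟩ : ∃ i, u i ≠ 0 := Function.ne_iff.1 hu
  obtain ⟨j, hj⟩ : ∃ j, q j ≠ 0 := Function.ne_iff.1 hq
  exact fun h => mul_ne_zero hi hj (congrFun (congrFun h i) j)

lemma exists_smul_of_outer_add_outer_eq_zero {u u' : Fin k → ℂ} {q q' : Fin m → ℂ}
    (hu : u ≠ 0) (hq : q ≠ 0) (h : outer u q' + outer u' q = 0) :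
    ∃ a : ℂ, u' = a • u ∧ q' = -a • q := by
  obtain ⟨i₀, hi₀⟩ : ∃ i, u i ≠ 0 := Function.ne_iff.1 hu
  obtain ⟨j₀, hj₀⟩ : ∃ j, q j ≠ 0 := Function.ne_iff.1 hq
  have hij : ∀ i j, u i * q' j + u' i * q j = 0 := fun i j => congrFun (congrFun h i) j
  have hq' : ∀ j, q' j = -(u' i₀ / u i₀) * q j := fun j => by
    field_simp; linear_combination hij i₀ j
  refine ⟨u' i₀ / u i₀, funext fun i => ?_, funext hq'⟩
  have : (u' i - u' i₀ / u i₀ * u i) * q j₀ = 0 := by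
    linear_combination hij i j₀ - u i * hq' j₀
  simpa [sub_eq_zero] using (mul_eq_zero.1 this).resolve_right hj₀

def segreTangentMap (u : Fin k → ℂ) (q : Fin m → ℂ) :
    ((Fin k → ℂ) × (Fin m → ℂ) × ℂ) →ₗ[ℂ] Amb k m where
  toFun p := (outer u p.2.1 + outer p.1 q, p.2.2 • sqv u)
  map_add' a b := by
    ext <;> simp only [Prod.fst_add, Prod.snd_add, Pi.add_apply, Pi.smul_apply, smul_eq_mul,
      outer_apply] <;> ring
  map_smul' r a := by
    ext <;> simp only [Prod.smul_fst, Prod.smul_snd, Pi.add_apply, Pi.smul_apply, smul_eq_mul,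
      outer_apply, RingHom.id_apply] <;> ring

lemma segreTangentMap_apply (u u' : Fin k → ℂ) (q q' : Fin m → ℂ) (c : ℂ) :
    segreTangentMap u q (u', q', c) = (outer u q' + outer u' q, c • sqv u) := rfl

lemma coe_range_segreTangentMap (u : Fin k → ℂ) (q : Fin m → ℂ) :
    (LinearMap.range (segreTangentMap u q) : Set (Amb k m)) =
      {x | ∃ (u' : Fin k → ℂ) (q' : Fin m → ℂ) (c : ℂ),
        x = (outer u q' + outer u' q, c • sqv u)} := by
  ext x
  simp only [SetLike.mem_coe, LinearMap.mem_range, Prod.exists, segreTangentMap_apply,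
    Set.mem_ofPred_eq, eq_comm]

lemma ker_segreTangentMap {u : Fin k → ℂ} {q : Fin m → ℂ} (hu : u ≠ 0) (hq : q ≠ 0) :
    LinearMap.ker (segreTangentMap u q) = ℂ ∙ (u, -q, 0) := by
  refine le_antisymm ?_ ?_
  · rintro ⟨u', q', c⟩ hp
    obtain ⟨hT, hc⟩ := Prod.mk_eq_zero.1 (LinearMap.mem_ker.1 hp)
    obtain ⟨a, rfl, rfl⟩ := exists_smul_of_outer_add_outer_eq_zero hu hq hT
    have hc : c = 0 := (smul_eq_zero.1 hc).resolve_right (outer_ne_zero hu hu)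
    exact Submodule.mem_span_singleton.2 ⟨a, by simp [hc]⟩
  · rw [Submodule.span_singleton_le_iff_mem, LinearMap.mem_ker, segreTangentMap_apply]
    ext <;> simp [mul_comm]

lemma finrank_range_segreTangentMap {u : Fin k → ℂ} {q : Fin m → ℂ} (hu : u ≠ 0) (hq : q ≠ 0) :
    finrank ℂ (LinearMap.range (segreTangentMap u q)) = k + m := by
  have hker : finrank ℂ (LinearMap.ker (segreTangentMap u q)) = 1 := by
    rw [ker_segreTangentMap hu hq]
    exact finrank_span_singleton fun h => hu (congrArg Prod.fst h)
  have := LinearMap.finrank_range_add_finrank_ker (segreTangentMap u q)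
  simp only [hker, finrank_prod, finrank_fin_fun, finrank_self] at this
  omega

lemma HasDerivAt.outer {u : ℂ → Fin k → ℂ} {q : ℂ → Fin m → ℂ} {u' : Fin k → ℂ}
    {q' : Fin m → ℂ} {t : ℂ} (hu : HasDerivAt u u' t) (hq : HasDerivAt q q' t) :
    HasDerivAt (fun s => outer (u s) (q s)) (outer (u t) q' + outer u' (q t)) t := by
  refine hasDerivAt_pi.2 fun i => hasDerivAt_pi.2 fun j => ?_
  exact ((hasDerivAt_pi.1 hu i).mul (hasDerivAt_pi.1 hq j)).congr_deriv (by simp [add_comm])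

lemma HasDerivAt.smul_sqv_of_eq_zero {c : ℂ → ℂ} {u : ℂ → Fin k → ℂ} {c' : ℂ}
    {u' : Fin k → ℂ} {t : ℂ} (hc : HasDerivAt c c' t) (hu : HasDerivAt u u' t)
    (hct : c t = 0) :
    HasDerivAt (fun s => c s • sqv (u s)) (c' • sqv (u t)) t := by
  have := hc.smul (hu.outer hu)
  rw [hct, zero_smul, zero_add] at this
  exact this

end

/-- at `β = u ⊗ q` (with `u ≠ 0`, `q ≠ 0`) the set
`T_β = {u ⊗ q' + u' ⊗ q + c u²}` is a linear subspace of dimension `dim U + dim Q`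
containing the velocity at `t = 0` of every smooth curve in
`Ã = {u ⊗ q + c u²}` passing through `β` (so with `u₀ = u`, `q₀ = q`, `c₀ = 0`). -/
theorem tangent_space_of_vmrt_cone_at_segre_point
    (k m : ℕ) (u : Fin k → ℂ) (q : Fin m → ℂ) (hu : u ≠ 0) (hq : q ≠ 0) :
    (∃ T : Submodule ℂ (Amb k m),
        (T : Set (Amb k m)) =
          {x | ∃ (u' : Fin k → ℂ) (q' : Fin m → ℂ) (c : ℂ),
                x = (outer u q' + outer u' q, c • sqv u)} ∧
        finrank ℂ T = k + m) ∧
    (∀ (u_ : ℂ → Fin k → ℂ) (q_ : ℂ → Fin m → ℂ) (c_ : ℂ → ℂ)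
        (γ : ℂ → Amb k m) (v : Amb k m),
        (∀ t, γ t = (outer (u_ t) (q_ t), c_ t • sqv (u_ t))) →
        u_ 0 = u → q_ 0 = q → c_ 0 = 0 →
        DifferentiableAt ℂ u_ 0 → DifferentiableAt ℂ q_ 0 → DifferentiableAt ℂ c_ 0 →
        HasDerivAt γ v 0 →
        v ∈ {x : Amb k m | ∃ (u' : Fin k → ℂ) (q' : Fin m → ℂ) (c : ℂ),
                x = (outer u q' + outer u' q, c • sqv u)}) := by
  refine ⟨⟨LinearMap.range (segreTangentMap u q), coe_range_segreTangentMap u q,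
    finrank_range_segreTangentMap hu hq⟩, ?_⟩
  rintro u_ q_ c_ γ v hγ rfl rfl hc₀ hdu hdq hdc hv
  rw [funext hγ] at hv
  have hγ' := (hdu.hasDerivAt.outer hdq.hasDerivAt).prodMk
    (hdc.hasDerivAt.smul_sqv_of_eq_zero hdu.hasDerivAt hc₀)
  exact ⟨deriv u_ 0, deriv q_ 0, deriv c_ 0, hv.unique hγ'⟩
end

section
/- Let $U, U', Q, Q'$ be nonzero finite-dimensional complex vector spaces with $\dim U, \dim Q \geq 2$. Suppose $\phi : U' \otimes Q' \to U \otimes Q$ is an injective linear map sending every decomposable tensor to a decomposable tensor (i.e., the image of the Segre cone of $U' \otimes Q'$ lies in the Segre cone of $U \otimes Q$), and suppose the image of the projectivized Segre variety $\mathbb P(U') \times \mathbb P(Q')$ under $\phi$ is not contained in a set of the form $\mathbb P(u \otimes Q)$ or $\mathbb P(U \otimes q)$. Then there exist injective linear maps $a: U' \to U$, $b: Q' \to Q$ with $\phi(u' \otimes q') = a(u') \otimes b(q')$ for all $u', q'$, or injective linear maps $a: Q' \to U$, $b: U' \to Q$ with $\phi(u' \otimes q') = a(q') \otimes b(u')$.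 -/
open Module
open scoped TensorProduct

namespace SegreAux

variable {U Q V : Type*}
  [AddCommGroup U] [Module ℂ U] [AddCommGroup Q] [Module ℂ Q]
  [AddCommGroup V] [Module ℂ V]

lemma pair_symm {u v : U} (h : LinearIndependent ℂ ![u, v]) :
    LinearIndependent ℂ ![v, u] := by
  rw [linearIndependent_fin2] at h ⊢
  simp only [Matrix.cons_val_one, Matrix.head_cons, Matrix.cons_val_zero] at h ⊢
  obtain ⟨hv, hau⟩ := h
  constructor
  · rintro rfl
    exact hau 0 (by simp)
  · intro a ha
    rcases eq_or_ne a 0 with rfl | ha0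
    · rw [zero_smul] at ha; exact hv ha.symm
    · exact hau a⁻¹ (by rw [← ha, smul_smul, inv_mul_cancel₀ ha0, one_smul])

lemma exists_dual_pair {u v : U} (h : LinearIndependent ℂ ![u, v]) :
    ∃ f : U →ₗ[ℂ] ℂ, f u = 1 ∧ f v = 0 := by
  have hnm : u ∉ Submodule.span ℂ {v} := by
    rw [Submodule.mem_span_singleton]
    rintro ⟨a, ha⟩
    exact (linearIndependent_fin2.mp h).2 a (by simpa using ha)
  obtain ⟨f, hf0, hfmap⟩ := Submodule.exists_dual_map_eq_bot_of_notMem hnm inferInstance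
  have hfv : f v = 0 := by
    have : f v ∈ Submodule.map f (Submodule.span ℂ {v}) :=
      ⟨v, Submodule.mem_span_singleton_self v, rfl⟩
    rwa [hfmap, Submodule.mem_bot] at this
  refine ⟨(f u)⁻¹ • f, ?_, ?_⟩
  · simp [inv_mul_cancel₀ hf0]
  · simp [hfv]

noncomputable def contractL (f : U →ₗ[ℂ] ℂ) : U ⊗[ℂ] Q →ₗ[ℂ] Q :=
  (TensorProduct.lid ℂ Q).toLinearMap ∘ₗ (LinearMap.rTensor Q f)

@[simp] lemma contractL_tmul (f : U →ₗ[ℂ] ℂ) (u : U) (q : Q) :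
    contractL f (u ⊗ₜ[ℂ] q) = f u • q := by
  simp [contractL]

lemma tmul_ne_zero {u : U} {q : Q} (hu : u ≠ 0) (hq : q ≠ 0) : u ⊗ₜ[ℂ] q ≠ 0 := by
  obtain ⟨f, hf⟩ : ∃ f : U →ₗ[ℂ] ℂ, f u ≠ 0 := by
    by_contra hc; push_neg at hc
    exact hu ((Module.forall_dual_apply_eq_zero_iff ℂ u).mp hc)
  intro h
  have h2 := congrArg (contractL (Q := Q) f) h
  rw [contractL_tmul, map_zero, smul_eq_zero] at h2
  rcases h2 with h2 | h2
  · exact hf h2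
  · exact hq h2

lemma tmul_left_cancel {u : U} (hu : u ≠ 0) {a b : Q} (h : u ⊗ₜ[ℂ] a = u ⊗ₜ[ℂ] b) : a = b := by
  by_contra hne
  exact tmul_ne_zero hu (sub_ne_zero.mpr hne) (by rw [TensorProduct.tmul_sub, h, sub_self])

lemma indep_tmul_add_eq_zero {u v : U} (h : LinearIndependent ℂ ![u, v]) {a b : Q}
    (hab : u ⊗ₜ[ℂ] a + v ⊗ₜ[ℂ] b = 0) : a = 0 ∧ b = 0 := by
  obtain ⟨f, hf1, hf2⟩ := exists_dual_pair h
  obtain ⟨g, hg1, hg2⟩ := exists_dual_pair (pair_symm h)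
  have ha := congrArg (contractL (Q := Q) f) hab
  have hb := congrArg (contractL (Q := Q) g) hab
  simp [hf1, hf2, hg1, hg2] at ha hb
  exact ⟨ha, hb⟩

lemma not_decomposable {u v : U} {a b : Q} (hu : LinearIndependent ℂ ![u, v])
    (hq : LinearIndependent ℂ ![a, b]) (x : U) (y : Q) :
    u ⊗ₜ[ℂ] a + v ⊗ₜ[ℂ] b ≠ x ⊗ₜ[ℂ] y := by
  intro h
  obtain ⟨f, hf1, hf2⟩ := exists_dual_pair hu
  obtain ⟨g, hg1, hg2⟩ := exists_dual_pair (pair_symm hu)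
  have ha := congrArg (contractL (Q := Q) f) h
  have hb := congrArg (contractL (Q := Q) g) h
  simp only [map_add, contractL_tmul, hf1, hf2, hg1, hg2, one_smul, zero_smul,
    add_zero, zero_add] at ha hb
  -- ha : a = f x • y, hb : b = g x • y
  have hdep : (g x) • a + (-(f x)) • b = 0 := by
    rw [ha, hb, smul_smul, neg_smul, smul_smul, mul_comm, add_neg_cancel]
  obtain ⟨h1, h2⟩ := LinearIndependent.pair_iff.mp hq (g x) (-(f x)) hdep
  have ha0 : a ≠ 0 := by
    have := hq.ne_zero 0; simpa using this
  apply ha0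
  rw [ha]
  have hfx : f x = 0 := by simpa using h2
  rw [hfx, zero_smul]


lemma mem_span_of_not_indep {x y : U} (h : ¬ LinearIndependent ℂ ![y, x]) (hx : x ≠ 0) :
    y ∈ Submodule.span ℂ {x} := by
  rw [linearIndependent_fin2] at h
  push_neg at h
  simp only [Matrix.cons_val_one, Matrix.head_cons, Matrix.cons_val_zero] at h
  obtain ⟨a, ha⟩ := h hx
  exact Submodule.mem_span_singleton.mpr ⟨a, ha⟩

lemma indep_of_not_mem_span {x y : U} (hx : x ≠ 0) (hy : y ∉ Submodule.span ℂ {x}) :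
    LinearIndependent ℂ ![y, x] := by
  rw [linearIndependent_fin2]
  simp only [Matrix.cons_val_one, Matrix.head_cons, Matrix.cons_val_zero]
  exact ⟨hx, fun a ha => hy (Submodule.mem_span_singleton.mpr ⟨a, ha⟩)⟩

lemma not_indep_both_span {x y v : U} (h : LinearIndependent ℂ ![x, y])
    (hx : x ∈ Submodule.span ℂ {v}) (hy : y ∈ Submodule.span ℂ {v}) : False := by
  obtain ⟨s, hs⟩ := Submodule.mem_span_singleton.mp hx
  obtain ⟨t, ht⟩ := Submodule.mem_span_singleton.mp hy
  have hx0 : x ≠ 0 := by have := h.ne_zero 0; simpa using this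
  have hs0 : s ≠ 0 := by rintro rfl; rw [zero_smul] at hs; exact hx0 hs.symm
  have h2 := (linearIndependent_fin2.mp (pair_symm h)).2 (t * s⁻¹)
  simp only [Matrix.cons_val_one, Matrix.head_cons, Matrix.cons_val_zero] at h2
  apply h2
  rw [← hs, ← ht, smul_smul, mul_assoc, inv_mul_cancel₀ hs0, mul_one]

lemma left_mem_span_of_tmul_eq {u x : U} {a y : Q} (h : u ⊗ₜ[ℂ] a = x ⊗ₜ[ℂ] y)
    (hne : u ⊗ₜ[ℂ] a ≠ 0) : x ∈ Submodule.span ℂ {u} := by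
  have hu : u ≠ 0 := by rintro rfl; rw [TensorProduct.zero_tmul] at hne; exact hne rfl
  by_contra hx
  have hind := indep_of_not_mem_span hu hx
  obtain ⟨f, hfx, hfu⟩ := exists_dual_pair hind
  have h2 := congrArg (contractL (Q := Q) f) h
  simp only [contractL_tmul, hfx, hfu, zero_smul, one_smul] at h2
  apply hne
  rw [h, ← h2, TensorProduct.tmul_zero]

lemma exists_factor_left {u : U} (hu : u ≠ 0) (ψ : V →ₗ[ℂ] U ⊗[ℂ] Q)
    (h : ∀ v, ∃ q, ψ v = u ⊗ₜ[ℂ] q) : ∃ b : V →ₗ[ℂ] Q, ∀ v, ψ v = u ⊗ₜ[ℂ] b v := by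
  choose b hb using h
  refine ⟨⟨⟨b, fun v w => ?_⟩, fun c v => ?_⟩, hb⟩
  · apply tmul_left_cancel hu
    rw [TensorProduct.tmul_add, ← hb, ← hb, ← hb, map_add]
  · apply tmul_left_cancel hu
    simp only [RingHom.id_apply]
    rw [TensorProduct.tmul_smul, ← hb, ← hb, map_smul]

lemma exists_factor_right {q : Q} (hq : q ≠ 0) (ψ : V →ₗ[ℂ] U ⊗[ℂ] Q)
    (h : ∀ v, ∃ u, ψ v = u ⊗ₜ[ℂ] q) : ∃ a : V →ₗ[ℂ] U, ∀ v, ψ v = a v ⊗ₜ[ℂ] q := by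
  obtain ⟨a, ha⟩ := exists_factor_left hq
    ((TensorProduct.comm ℂ U Q).toLinearMap ∘ₗ ψ)
    (fun v => by
      obtain ⟨u, hu⟩ := h v
      exact ⟨u, by simp [hu]⟩)
  refine ⟨a, fun v => ?_⟩
  have h2 := ha v
  simp only [LinearMap.coe_comp, LinearEquiv.coe_coe, Function.comp_apply] at h2
  apply (TensorProduct.comm ℂ U Q).injective
  simpa using h2

lemma exists_scalar_factor {v : U} (hv : v ≠ 0) (α : V →ₗ[ℂ] U)
    (h : ∀ x, α x ∈ Submodule.span ℂ {v}) : ∃ c : V →ₗ[ℂ] ℂ, ∀ x, α x = c x • v := by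
  choose c hc using fun x => Submodule.mem_span_singleton.mp (h x)
  have key : ∀ s t : ℂ, s • v = t • v → s = t := by
    intro s t hst
    by_contra hne
    have : (s - t) • v = 0 := by rw [sub_smul, hst, sub_self]
    rcases smul_eq_zero.mp this with h' | h'
    · exact hne (sub_eq_zero.mp h')
    · exact hv h'
  refine ⟨⟨⟨c, fun x y => ?_⟩, fun m x => ?_⟩, fun x => (hc x).symm⟩
  · apply key; rw [add_smul, hc, hc, hc, map_add]
  · apply key
    rw [smul_eq_mul, mul_smul, hc, hc, map_smul]
    rfl

lemma exists_indep_values (α : V →ₗ[ℂ] U)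
    (hn : ¬ ∃ v : U, v ≠ 0 ∧ ∀ x, α x ∈ Submodule.span ℂ {v})
    (hα : ∃ x, α x ≠ 0) : ∃ x y, LinearIndependent ℂ ![α x, α y] := by
  obtain ⟨x₀, hx₀⟩ := hα
  by_contra hc
  push_neg at hc
  apply hn
  refine ⟨α x₀, hx₀, fun x => ?_⟩
  exact mem_span_of_not_indep (hc x x₀) hx₀

lemma submodule_union {S T : Submodule ℂ V} (h : ∀ v, v ∈ S ∨ v ∈ T) :
    (∀ v, v ∈ S) ∨ (∀ v, v ∈ T) := by
  by_contra hc
  push_neg at hc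
  obtain ⟨⟨x, hx⟩, ⟨y, hy⟩⟩ := hc
  have hxT : x ∈ T := (h x).resolve_left hx
  have hyS : y ∈ S := (h y).resolve_right hy
  rcases h (x + y) with hxy | hxy
  · exact hx (by simpa using S.sub_mem hxy hyS)
  · exact hy (by simpa using T.sub_mem hxy hxT)

lemma line_dichotomy (ψ : V →ₗ[ℂ] U ⊗[ℂ] Q)
    (hd : ∀ v, ∃ u q, ψ v = u ⊗ₜ[ℂ] q)
    (u₀ : U) (hu₀ : u₀ ≠ 0) (q₀ : Q) (hq₀ : q₀ ≠ 0) :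
    (∃ u : U, u ≠ 0 ∧ ∀ v, ∃ q, ψ v = u ⊗ₜ[ℂ] q) ∨
    (∃ q : Q, q ≠ 0 ∧ ∀ v, ∃ u, ψ v = u ⊗ₜ[ℂ] q) := by
  by_cases hz : ∀ v, ψ v = 0
  · exact Or.inl ⟨u₀, hu₀, fun v => ⟨0, by rw [hz, TensorProduct.tmul_zero]⟩⟩
  push_neg at hz
  obtain ⟨v₀, hv₀⟩ := hz
  obtain ⟨u₁, q₁, h₁⟩ := hd v₀
  have hu₁ : u₁ ≠ 0 := by rintro rfl; rw [TensorProduct.zero_tmul] at h₁; exact hv₀ h₁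
  have hq₁ : q₁ ≠ 0 := by rintro rfl; rw [TensorProduct.tmul_zero] at h₁; exact hv₀ h₁
  set A := Submodule.comap ψ (LinearMap.range ((TensorProduct.mk ℂ U Q) u₁)) with hA
  set B := Submodule.comap ψ (LinearMap.range (((TensorProduct.mk ℂ U Q)).flip q₁)) with hB
  have hmemA : ∀ v, v ∈ A ↔ ∃ q, ψ v = u₁ ⊗ₜ[ℂ] q := by
    intro v
    simp only [hA, Submodule.mem_comap, LinearMap.mem_range, TensorProduct.mk_apply]
    exact ⟨fun ⟨q, hq⟩ => ⟨q, hq.symm⟩, fun ⟨q, hq⟩ => ⟨q, hq.symm⟩⟩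
  have hmemB : ∀ v, v ∈ B ↔ ∃ u, ψ v = u ⊗ₜ[ℂ] q₁ := by
    intro v
    simp only [hB, Submodule.mem_comap, LinearMap.mem_range, LinearMap.flip_apply,
      TensorProduct.mk_apply]
    exact ⟨fun ⟨u, hu⟩ => ⟨u, hu.symm⟩, fun ⟨u, hu⟩ => ⟨u, hu.symm⟩⟩
  have hAB : ∀ v, v ∈ A ∨ v ∈ B := by
    intro v
    obtain ⟨u, q, huq⟩ := hd v
    obtain ⟨x, y, hxy⟩ := hd (v₀ + v)
    rw [map_add, h₁, huq] at hxy
    by_cases hus : u ∈ Submodule.span ℂ {u₁}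
    · left
      rw [hmemA]
      obtain ⟨c, hc⟩ := Submodule.mem_span_singleton.mp hus
      exact ⟨c • q, by rw [huq, ← hc, TensorProduct.smul_tmul]⟩
    · by_cases hqs : q ∈ Submodule.span ℂ {q₁}
      · right
        rw [hmemB]
        obtain ⟨c, hc⟩ := Submodule.mem_span_singleton.mp hqs
        exact ⟨c • u, by rw [huq, ← hc, TensorProduct.smul_tmul]⟩
      · exfalso
        exact not_decomposable (pair_symm (indep_of_not_mem_span hu₁ hus))
          (pair_symm (indep_of_not_mem_span hq₁ hqs)) x y hxy
  rcases submodule_union hAB with h | h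
  · exact Or.inl ⟨u₁, hu₁, fun v => (hmemA v).mp (h v)⟩
  · exact Or.inr ⟨q₁, hq₁, fun v => (hmemB v).mp (h v)⟩


section Main

variable {U U' Q Q' : Type*}
  [AddCommGroup U] [Module ℂ U] [AddCommGroup Q] [Module ℂ Q]
  [AddCommGroup U'] [Module ℂ U'] [AddCommGroup Q'] [Module ℂ Q']

lemma no_mix (φ : U' ⊗[ℂ] Q' →ₗ[ℂ] U ⊗[ℂ] Q)
    (hinj : Function.Injective φ)
    (hdec : ∀ (u' : U') (q' : Q'), ∃ (u : U) (q : Q), φ (u' ⊗ₜ[ℂ] q') = u ⊗ₜ[ℂ] q)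
    (q'₁ : Q') (hq'₁ : q'₁ ≠ 0)
    (u'₁ : U') (hu'₁ : u'₁ ≠ 0)
    (hnP : ¬ ∃ u : U, u ≠ 0 ∧ ∃ b : Q' →ₗ[ℂ] Q, ∀ q', φ (u'₁ ⊗ₜ[ℂ] q') = u ⊗ₜ[ℂ] b q')
    (hR : ∃ q : Q, q ≠ 0 ∧ ∃ a : Q' →ₗ[ℂ] U, ∀ q', φ (u'₁ ⊗ₜ[ℂ] q') = a q' ⊗ₜ[ℂ] q)
    (u'₂ : U') (hu'₂ : u'₂ ≠ 0)
    (hnR : ¬ ∃ q : Q, q ≠ 0 ∧ ∃ a : Q' →ₗ[ℂ] U, ∀ q', φ (u'₂ ⊗ₜ[ℂ] q') = a q' ⊗ₜ[ℂ] q)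
    (hP : ∃ u : U, u ≠ 0 ∧ ∃ b : Q' →ₗ[ℂ] Q, ∀ q', φ (u'₂ ⊗ₜ[ℂ] q') = u ⊗ₜ[ℂ] b q') :
    False := by
  obtain ⟨q₁, hq₁, α, hα⟩ := hR
  obtain ⟨u₂, hu₂, β, hβ⟩ := hP
  have hφne : ∀ (w : U') (x : Q'), w ≠ 0 → x ≠ 0 → φ (w ⊗ₜ[ℂ] x) ≠ 0 := by
    intro w x hw hx h
    exact tmul_ne_zero hw hx (hinj (by rw [h, map_zero]))
  -- α has two independent values
  have hαn : ¬ ∃ v : U, v ≠ 0 ∧ ∀ x, α x ∈ Submodule.span ℂ {v} := by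
    rintro ⟨v, hv, hsp⟩
    apply hnP
    obtain ⟨c, hc⟩ := exists_scalar_factor hv α hsp
    refine ⟨v, hv, LinearMap.smulRight c q₁, fun q' => ?_⟩
    rw [hα q', hc q', TensorProduct.smul_tmul, LinearMap.smulRight_apply]
  have hαex : ∃ x, α x ≠ 0 := by
    refine ⟨q'₁, fun h0 => ?_⟩
    have := hα q'₁
    rw [h0, TensorProduct.zero_tmul] at this
    exact hφne u'₁ q'₁ hu'₁ hq'₁ this
  obtain ⟨xa, xb, hindα⟩ := exists_indep_values α hαn hαex
  -- β has two independent values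
  have hβn : ¬ ∃ v : Q, v ≠ 0 ∧ ∀ x, β x ∈ Submodule.span ℂ {v} := by
    rintro ⟨v, hv, hsp⟩
    apply hnR
    obtain ⟨c, hc⟩ := exists_scalar_factor hv β hsp
    refine ⟨v, hv, LinearMap.smulRight c u₂, fun q' => ?_⟩
    rw [hβ q', hc q', ← TensorProduct.smul_tmul, LinearMap.smulRight_apply]
  have hβex : ∃ x, β x ≠ 0 := by
    refine ⟨q'₁, fun h0 => ?_⟩
    have := hβ q'₁
    rw [h0, TensorProduct.tmul_zero] at this
    exact hφne u'₂ q'₁ hu'₂ hq'₁ this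
  obtain ⟨ya, yb, hindβ⟩ := exists_indep_values β hβn hβex
  -- pointwise dichotomy
  have hpt : ∀ q', q' ∈ Submodule.comap α (Submodule.span ℂ {u₂}) ∨
      q' ∈ Submodule.comap β (Submodule.span ℂ {q₁}) := by
    intro q'
    obtain ⟨x, y, hxy⟩ := hdec (u'₁ + u'₂) q'
    rw [TensorProduct.add_tmul, map_add, hα q', hβ q'] at hxy
    by_cases h1 : LinearIndependent ℂ ![α q', u₂]
    · right
      rw [Submodule.mem_comap]
      have h2 : ¬ LinearIndependent ℂ ![q₁, β q'] := fun hi =>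
        not_decomposable h1 hi x y hxy
      exact mem_span_of_not_indep (fun hi => h2 (pair_symm hi)) hq₁
    · left
      rw [Submodule.mem_comap]
      exact mem_span_of_not_indep h1 hu₂
  rcases submodule_union hpt with h | h
  · exact not_indep_both_span hindα (h xa) (h xb)
  · exact not_indep_both_span hindβ (h ya) (h yb)


lemma case_left (φ : U' ⊗[ℂ] Q' →ₗ[ℂ] U ⊗[ℂ] Q)
    (hinj : Function.Injective φ)
    (hdec : ∀ (u' : U') (q' : Q'), ∃ (u : U) (q : Q), φ (u' ⊗ₜ[ℂ] q') = u ⊗ₜ[ℂ] q)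
    (hnotU : ¬ ∃ u : U, ∀ (u' : U') (q' : Q'), ∃ q : Q, φ (u' ⊗ₜ[ℂ] q') = u ⊗ₜ[ℂ] q)
    (u₀ : U) (hu₀ : u₀ ≠ 0) (q₀ : Q) (hq₀ : q₀ ≠ 0)
    (u'₁ : U') (hu'₁ : u'₁ ≠ 0)
    (hcase : ∀ u' : U', u' ≠ 0 →
      ∃ u : U, u ≠ 0 ∧ ∃ b : Q' →ₗ[ℂ] Q, ∀ q', φ (u' ⊗ₜ[ℂ] q') = u ⊗ₜ[ℂ] b q') :
    ∃ (a : U' →ₗ[ℂ] U) (b : Q' →ₗ[ℂ] Q),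
      Function.Injective a ∧ Function.Injective b ∧
      ∀ (u' : U') (q' : Q'), φ (u' ⊗ₜ[ℂ] q') = a u' ⊗ₜ[ℂ] b q' := by
  have hφne : ∀ (w : U') (x : Q'), w ≠ 0 → x ≠ 0 → φ (w ⊗ₜ[ℂ] x) ≠ 0 := by
    intro w x hw hx h
    exact tmul_ne_zero hw hx (hinj (by rw [h, map_zero]))
  -- Step 5a : there is a nonzero q'₀ whose line is of "right" type
  have h5a : ∃ q'₀ : Q', q'₀ ≠ 0 ∧ ∃ qq : Q, qq ≠ 0 ∧ ∃ g : U' →ₗ[ℂ] U,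
      ∀ u', φ (u' ⊗ₜ[ℂ] q'₀) = g u' ⊗ₜ[ℂ] qq := by
    by_contra hno
    push_neg at hno
    apply hnotU
    obtain ⟨u₁, hu₁, b₁, hb₁⟩ := hcase u'₁ hu'₁
    refine ⟨u₁, fun u' q' => ?_⟩
    by_cases hq' : q' = 0
    · exact ⟨0, by rw [hq', TensorProduct.tmul_zero, map_zero, TensorProduct.tmul_zero]⟩
    set F : U' →ₗ[ℂ] U ⊗[ℂ] Q := φ ∘ₗ ((TensorProduct.mk ℂ U' Q').flip q') with hF
    have hFap : ∀ w, F w = φ (w ⊗ₜ[ℂ] q') := fun w => rfl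
    have hFd : ∀ w, ∃ u q, F w = u ⊗ₜ[ℂ] q := fun w => hdec w q'
    rcases line_dichotomy F hFd u₀ hu₀ q₀ hq₀ with ⟨u, hu, hFP⟩ | ⟨q, hq, hFR⟩
    · obtain ⟨qq, hqq⟩ := hFP u'₁
      rw [hFap] at hqq
      have heq : u₁ ⊗ₜ[ℂ] b₁ q' = u ⊗ₜ[ℂ] qq := by rw [← hb₁, hqq]
      have hne : u₁ ⊗ₜ[ℂ] b₁ q' ≠ 0 := by rw [← hb₁]; exact hφne u'₁ q' hu'₁ hq'
      have husp := left_mem_span_of_tmul_eq heq hne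
      obtain ⟨c, hc⟩ := Submodule.mem_span_singleton.mp husp
      obtain ⟨qq', hqq'⟩ := hFP u'
      rw [hFap] at hqq'
      exact ⟨c • qq', by rw [hqq', ← hc, TensorProduct.smul_tmul]⟩
    · exfalso
      obtain ⟨a, ha⟩ := exists_factor_right hq F hFR
      obtain ⟨u', hu'⟩ := hno q' hq' q hq a
      exact hu' (ha u')
  obtain ⟨q'₀, hq'₀, qq, hqq, g, hg⟩ := h5a
  have hginj : Function.Injective g := by
    rw [injective_iff_map_eq_zero]
    intro w hw
    by_contra hwne
    apply hφne w q'₀ hwne hq'₀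
    rw [hg w, hw, TensorProduct.zero_tmul]
  have hgne : ∀ u' : U', u' ≠ 0 → g u' ≠ 0 := by
    intro u' hu' h
    exact hu' (hginj (by rw [h, map_zero]))
  -- key : values on the line of u' lie in (g u') ⊗ Q
  have key : ∀ u' : U', u' ≠ 0 → ∀ q', ∃ y : Q, φ (u' ⊗ₜ[ℂ] q') = g u' ⊗ₜ[ℂ] y := by
    intro u' hu' q'
    obtain ⟨u, hu, b, hb⟩ := hcase u' hu'
    have h0 : g u' ⊗ₜ[ℂ] qq = u ⊗ₜ[ℂ] b q'₀ := by rw [← hb, hg]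
    have hne : g u' ⊗ₜ[ℂ] qq ≠ 0 := tmul_ne_zero (hgne u' hu') hqq
    have husp := left_mem_span_of_tmul_eq h0 hne
    obtain ⟨c, hc⟩ := Submodule.mem_span_singleton.mp husp
    exact ⟨c • b q', by rw [hb, ← hc, TensorProduct.smul_tmul]⟩
  -- define the second factor from the line of u'₁
  obtain ⟨h1, hh1⟩ := exists_factor_left (hgne u'₁ hu'₁)
    (φ ∘ₗ TensorProduct.mk ℂ U' Q' u'₁) (fun q' => key u'₁ hu'₁ q')
  have hh1' : ∀ q', φ (u'₁ ⊗ₜ[ℂ] q') = g u'₁ ⊗ₜ[ℂ] h1 q' := fun q' => hh1 q'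
  have main : ∀ (u' : U') (q' : Q'), φ (u' ⊗ₜ[ℂ] q') = g u' ⊗ₜ[ℂ] h1 q' := by
    intro u' q'
    by_cases hu' : u' = 0
    · rw [hu', TensorProduct.zero_tmul, map_zero, map_zero, TensorProduct.zero_tmul]
    by_cases hsp : u' ∈ Submodule.span ℂ {u'₁}
    · obtain ⟨c, hc⟩ := Submodule.mem_span_singleton.mp hsp
      rw [← hc,
        show (c • u'₁) ⊗ₜ[ℂ] q' = c • (u'₁ ⊗ₜ[ℂ] q') from (TensorProduct.smul_tmul' _ _ _).symm,
        map_smul, hh1' q', map_smul, TensorProduct.smul_tmul']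
    · have hgsp : g u' ∉ Submodule.span ℂ {g u'₁} := by
        intro hmem
        obtain ⟨c, hc⟩ := Submodule.mem_span_singleton.mp hmem
        apply hsp
        have : g (u' - c • u'₁) = 0 := by rw [map_sub, map_smul, hc, sub_self]
        have h0 : u' - c • u'₁ = 0 := hginj (by rw [this, map_zero])
        exact Submodule.mem_span_singleton.mpr ⟨c, (sub_eq_zero.mp h0).symm⟩
      have hind : LinearIndependent ℂ ![g u', g u'₁] :=
        indep_of_not_mem_span (hgne u'₁ hu'₁) hgsp
      obtain ⟨h2, hh2⟩ := exists_factor_left (hgne u' hu')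
        (φ ∘ₗ TensorProduct.mk ℂ U' Q' u') (fun x => key u' hu' x)
      have hh2' : ∀ x, φ (u' ⊗ₜ[ℂ] x) = g u' ⊗ₜ[ℂ] h2 x := fun x => hh2 x
      have hsum : u' + u'₁ ≠ 0 := by
        intro h
        apply hsp
        have : u' = (-1 : ℂ) • u'₁ := by
          rw [neg_smul, one_smul, ← add_eq_zero_iff_eq_neg]; exact h
        exact Submodule.mem_span_singleton.mpr ⟨-1, this.symm⟩
      obtain ⟨h3, hh3⟩ := exists_factor_left (hgne _ hsum)
        (φ ∘ₗ TensorProduct.mk ℂ U' Q' (u' + u'₁)) (fun x => key _ hsum x)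
      have hh3' : φ ((u' + u'₁) ⊗ₜ[ℂ] q') = g (u' + u'₁) ⊗ₜ[ℂ] h3 q' := hh3 q'
      rw [TensorProduct.add_tmul, map_add, hh2' q', hh1' q', map_add,
        TensorProduct.add_tmul] at hh3'
      have e : g u' ⊗ₜ[ℂ] (h2 q' - h3 q') + g u'₁ ⊗ₜ[ℂ] (h1 q' - h3 q') = 0 := by
        rw [TensorProduct.tmul_sub, TensorProduct.tmul_sub]
        rw [← sub_eq_zero] at hh3'
        calc g u' ⊗ₜ[ℂ] h2 q' - g u' ⊗ₜ[ℂ] h3 q' +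
              (g u'₁ ⊗ₜ[ℂ] h1 q' - g u'₁ ⊗ₜ[ℂ] h3 q')
            = g u' ⊗ₜ[ℂ] h2 q' + g u'₁ ⊗ₜ[ℂ] h1 q' -
              (g u' ⊗ₜ[ℂ] h3 q' + g u'₁ ⊗ₜ[ℂ] h3 q') := by abel
          _ = 0 := hh3'
      obtain ⟨hz1, hz2⟩ := indep_tmul_add_eq_zero hind e
      rw [hh2' q', sub_eq_zero.mp hz1, ← sub_eq_zero.mp hz2]
  have hhinj : Function.Injective h1 := by
    rw [injective_iff_map_eq_zero]
    intro x hx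
    by_contra hxne
    apply hφne u'₁ x hu'₁ hxne
    rw [hh1' x, hx, TensorProduct.tmul_zero]
  exact ⟨g, h1, hginj, hhinj, main⟩

end Main

end SegreAux

open SegreAux in
/-- an injective linear map `φ : U' ⊗ Q' → U ⊗ Q` sending decomposable
tensors to decomposable tensors, whose image of the Segre variety is not contained in a
single `ℙ(u ⊗ Q)` or `ℙ(U ⊗ q)`, is a tensor product of injective linear maps, possibly
after swapping the two factors. -/
theorem segre_preserving_map_is_tensor_product
    (U U' Q Q' : Type*)
    [AddCommGroup U] [Module ℂ U] [FiniteDimensional ℂ U]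
    [AddCommGroup U'] [Module ℂ U'] [FiniteDimensional ℂ U']
    [AddCommGroup Q] [Module ℂ Q] [FiniteDimensional ℂ Q]
    [AddCommGroup Q'] [Module ℂ Q'] [FiniteDimensional ℂ Q']
    (hU : 2 ≤ finrank ℂ U) (hQ : 2 ≤ finrank ℂ Q)
    (hU' : 0 < finrank ℂ U') (hQ' : 0 < finrank ℂ Q')
    (φ : U' ⊗[ℂ] Q' →ₗ[ℂ] U ⊗[ℂ] Q)
    (hinj : Function.Injective φ)
    (hdec : ∀ (u' : U') (q' : Q'), ∃ (u : U) (q : Q), φ (u' ⊗ₜ[ℂ] q') = u ⊗ₜ[ℂ] q)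
    (hnotU : ¬ ∃ u : U, ∀ (u' : U') (q' : Q'), ∃ q : Q, φ (u' ⊗ₜ[ℂ] q') = u ⊗ₜ[ℂ] q)
    (hnotQ : ¬ ∃ q : Q, ∀ (u' : U') (q' : Q'), ∃ u : U, φ (u' ⊗ₜ[ℂ] q') = u ⊗ₜ[ℂ] q) :
    (∃ (a : U' →ₗ[ℂ] U) (b : Q' →ₗ[ℂ] Q),
        Function.Injective a ∧ Function.Injective b ∧
        ∀ (u' : U') (q' : Q'), φ (u' ⊗ₜ[ℂ] q') = a u' ⊗ₜ[ℂ] b q') ∨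
    (∃ (a : Q' →ₗ[ℂ] U) (b : U' →ₗ[ℂ] Q),
        Function.Injective a ∧ Function.Injective b ∧
        ∀ (u' : U') (q' : Q'), φ (u' ⊗ₜ[ℂ] q') = a q' ⊗ₜ[ℂ] b u') := by

  haveI : Nontrivial U := Module.finrank_pos_iff.mp (lt_of_lt_of_le two_pos hU)
  haveI : Nontrivial Q := Module.finrank_pos_iff.mp (lt_of_lt_of_le two_pos hQ)
  haveI : Nontrivial U' := Module.finrank_pos_iff.mp hU'
  haveI : Nontrivial Q' := Module.finrank_pos_iff.mp hQ'
  obtain ⟨u₀, hu₀⟩ := exists_ne (0 : U)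
  obtain ⟨q₀, hq₀⟩ := exists_ne (0 : Q)
  obtain ⟨u'₁, hu'₁⟩ := exists_ne (0 : U')
  obtain ⟨q'₁, hq'₁⟩ := exists_ne (0 : Q')
  -- per-line dichotomy
  have step1 : ∀ u' : U', u' ≠ 0 →
      (∃ u : U, u ≠ 0 ∧ ∃ b : Q' →ₗ[ℂ] Q, ∀ q', φ (u' ⊗ₜ[ℂ] q') = u ⊗ₜ[ℂ] b q') ∨
      (∃ q : Q, q ≠ 0 ∧ ∃ a : Q' →ₗ[ℂ] U, ∀ q', φ (u' ⊗ₜ[ℂ] q') = a q' ⊗ₜ[ℂ] q) := by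
    intro u' _
    set ψ : Q' →ₗ[ℂ] U ⊗[ℂ] Q := φ ∘ₗ TensorProduct.mk ℂ U' Q' u' with hψ
    have hψap : ∀ x, ψ x = φ (u' ⊗ₜ[ℂ] x) := fun x => rfl
    rcases line_dichotomy ψ (fun x => hdec u' x) u₀ hu₀ q₀ hq₀ with ⟨u, hu, hP⟩ | ⟨q, hq, hR⟩
    · left
      obtain ⟨b, hb⟩ := exists_factor_left hu ψ hP
      exact ⟨u, hu, b, fun x => by rw [← hψap]; exact hb x⟩
    · right
      obtain ⟨a, ha⟩ := exists_factor_right hq ψ hR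
      exact ⟨q, hq, a, fun x => by rw [← hψap]; exact ha x⟩
  by_cases hall : ∀ u' : U', u' ≠ 0 →
      ∃ u : U, u ≠ 0 ∧ ∃ b : Q' →ₗ[ℂ] Q, ∀ q', φ (u' ⊗ₜ[ℂ] q') = u ⊗ₜ[ℂ] b q'
  · exact Or.inl (case_left φ hinj hdec hnotU u₀ hu₀ q₀ hq₀ u'₁ hu'₁ hall)
  · obtain ⟨w₁, hw⟩ := not_forall.mp hall
    rw [_root_.not_imp] at hw
    obtain ⟨hw₁, hnP⟩ := hw
    have hRw₁ : ∃ q : Q, q ≠ 0 ∧ ∃ a : Q' →ₗ[ℂ] U, ∀ q', φ (w₁ ⊗ₜ[ℂ] q') = a q' ⊗ₜ[ℂ] q := by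
      rcases step1 w₁ hw₁ with hP | hR
      · exact absurd hP hnP
      · exact hR
    have hallR : ∀ u' : U', u' ≠ 0 →
        ∃ q : Q, q ≠ 0 ∧ ∃ a : Q' →ₗ[ℂ] U, ∀ q', φ (u' ⊗ₜ[ℂ] q') = a q' ⊗ₜ[ℂ] q := by
      intro u' hu'
      by_contra hnR
      rcases step1 u' hu' with hP | hR
      · exact no_mix φ hinj hdec q'₁ hq'₁ w₁ hw₁ hnP hRw₁ u' hu' hnR hP
      · exact hnR hR
    -- transport through comm
    right
    set φ' : U' ⊗[ℂ] Q' →ₗ[ℂ] Q ⊗[ℂ] U :=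
      (TensorProduct.comm ℂ U Q).toLinearMap ∘ₗ φ with hφ'
    have hφ'ap : ∀ x, φ' x = TensorProduct.comm ℂ U Q (φ x) := fun x => rfl
    have hinj' : Function.Injective φ' := by
      intro x y hxy
      exact hinj ((TensorProduct.comm ℂ U Q).injective (by rw [← hφ'ap, ← hφ'ap, hxy]))
    have hdec' : ∀ (u' : U') (q' : Q'), ∃ (q : Q) (u : U), φ' (u' ⊗ₜ[ℂ] q') = q ⊗ₜ[ℂ] u := by
      intro u' q'
      obtain ⟨u, q, h⟩ := hdec u' q'
      exact ⟨q, u, by rw [hφ'ap, h, TensorProduct.comm_tmul]⟩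
    have hnot' : ¬ ∃ q : Q, ∀ (u' : U') (q' : Q'), ∃ u : U, φ' (u' ⊗ₜ[ℂ] q') = q ⊗ₜ[ℂ] u := by
      rintro ⟨q, hq⟩
      apply hnotQ
      refine ⟨q, fun u' q' => ?_⟩
      obtain ⟨u, h⟩ := hq u' q'
      refine ⟨u, ?_⟩
      apply (TensorProduct.comm ℂ U Q).injective
      rw [← hφ'ap, TensorProduct.comm_tmul]
      exact h
    have hall' : ∀ u' : U', u' ≠ 0 →
        ∃ q : Q, q ≠ 0 ∧ ∃ a : Q' →ₗ[ℂ] U, ∀ q', φ' (u' ⊗ₜ[ℂ] q') = q ⊗ₜ[ℂ] a q' := by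
      intro u' hu'
      obtain ⟨q, hq, a, ha⟩ := hallR u' hu'
      exact ⟨q, hq, a, fun q' => by rw [hφ'ap, ha q', TensorProduct.comm_tmul]⟩
    obtain ⟨a, b, hainj, hbinj, hab⟩ :=
      case_left φ' hinj' hdec' hnot' q₀ hq₀ u₀ hu₀ u'₁ hu'₁ hall'
    refine ⟨b, a, hbinj, hainj, fun u' q' => ?_⟩
    apply (TensorProduct.comm ℂ U Q).injective
    rw [← hφ'ap, hab u' q', TensorProduct.comm_tmul]
end
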